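/- arXiv:2008.08833 — 2 statements merged into one kernel-verified Lean document; each statement's English description precedes it below -/
import Mathlib

section
/- Let 𝒜 be a unital associative ℂ-algebra, let n ≥ 1, let x₁,…,x_n ∈ 𝒜, let a : [n]×[n] → ℂ have rank ϱ ≥ 1 as a matrix, let b : [n] → ℂ and γ ∈ ℂ, and set p(x) = Σ_{ℓ,m=1}^n a(ℓ,m)·x_ℓx_m + Σ_{ℓ=1}^n b(ℓ)·x_ℓ + γ·1. Then there exist vectors r₁,…,r_ϱ ∈ ℂⁿ that are orthonormal and vectors s₀,s₁,…,s_ϱ ∈ ℂⁿ with s₁,…,s_ϱ nonzero and pairwise orthogonal such that, writing ⟨u,x⟩ = Σ_{ℓ=1}^n conj(u(ℓ))·x_ℓ ∈ 𝒜 for u ∈ ℂⁿ, for every z ∈ ℂ the (ϱ+1)×(ϱ+1) matrix L^z(x) over 𝒜 — with (0,0)-entry ⟨s₀,x⟩ + (γ−z)·1, (0,k)-entry ⟨r_k,x⟩ and (k,0)-entry ⟨s_k,x⟩ for k ∈ {1,…,ϱ}, (k,k)-entry −1 for k ∈ {1,…,ϱ}, and all other entries 0 — is invertible in Mat_{ϱ+1}(𝒜)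 if and only if p(x) − z·1 is invertible in 𝒜, and in that case the (0,0)-entry of (L^z(x))⁻¹ equals (p(x) − z·1)⁻¹. -/
noncomputable section

/-- `⟨u, x⟩ = Σ_ℓ conj(u ℓ) • x_ℓ` : the linear form on the algebra associated to `u ∈ ℂⁿ`. -/
def bracket {𝒜 : Type*} [Ring 𝒜] [Algebra ℂ 𝒜] {n : ℕ} (u : Fin n → ℂ) (x : Fin n → 𝒜) : 𝒜 :=
  ∑ ℓ, (starRingEnd ℂ) (u ℓ) • x ℓ

/-- Evaluation of the quadratic polynomial `p(x) = Σ a(ℓ,m) x_ℓ x_m + Σ b(ℓ) x_ℓ + γ·1`. -/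
def quadEvalAlg {𝒜 : Type*} [Ring 𝒜] [Algebra ℂ 𝒜] {n : ℕ}
    (a : Fin n → Fin n → ℂ) (b : Fin n → ℂ) (γ : ℂ) (x : Fin n → 𝒜) : 𝒜 :=
  (∑ ℓ, ∑ m, a ℓ m • (x ℓ * x m)) + (∑ ℓ, b ℓ • x ℓ) + algebraMap ℂ 𝒜 γ

/-- The `(ϱ+1) × (ϱ+1)` linearization matrix `L^z(x)` over the algebra `𝒜` built from the
vectors `r₁,…,r_ϱ` and `s₀,s₁,…,s_ϱ`:  its `(0,0)`-entry is `⟨s₀,x⟩ + (γ−z)·1`, its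
`(0,k)`-entry is `⟨r_k,x⟩`, its `(k,0)`-entry is `⟨s_k,x⟩`, its `(k,k)`-entry is `−1`
(`k ∈ {1,…,ϱ}`), and all other entries vanish. -/
def linMatAlg {𝒜 : Type*} [Ring 𝒜] [Algebra ℂ 𝒜] {n ϱ : ℕ}
    (r : Fin ϱ → Fin n → ℂ) (s : Fin (ϱ + 1) → Fin n → ℂ) (γ z : ℂ)
    (x : Fin n → 𝒜) : Matrix (Fin (ϱ + 1)) (Fin (ϱ + 1)) 𝒜 :=
  Matrix.of fun k l =>
    if hl : l = 0 then
      (if k = 0 then bracket (s 0) x + algebraMap ℂ 𝒜 (γ - z) else bracket (s k) x)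
    else if k = 0 then bracket (r (l.pred hl)) x
    else if k = l then -1 else 0

/-!
For `A = (a ℓ m)`, diagonalising `A Aᴴ = U D Uᴴ` and setting `B = Uᴴ A`, the rows
of `B` are orthogonal, vanish exactly for the zero eigenvalues, and `A = U B`; keeping the `ϱ`
columns of `U` and rows of `B` with nonzero eigenvalue gives
`a ℓ m = Σ_k conj (r_k ℓ) conj (t_k m)` with `r` orthonormal and `t` orthogonal and nonzero.
Then `p(x) - z = c + Σ_k ⟨r_k, x⟩ ⟨t_k, x⟩` with `c = ⟨conj b, x⟩ + (γ - z)`, which is the Schur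
complement of the `-1` block of `L^z(x)`. Over any ring, such an arrowhead matrix
`[[c, u], [v, -1]]` is invertible iff `c + Σ u_j v_j` is: block elimination gives an explicit
inverse, and conversely the first row (column) of a right (left) inverse `W` is forced to be
`W₀₀ u` (`v W₀₀`), so `W₀₀` inverts the Schur complement.
-/

namespace Matrix

section Arrowhead

variable {R : Type*} [Ring R] {ϱ : ℕ}

def arrowhead (c : R) (u v : Fin ϱ → R) : Matrix (Fin (ϱ + 1)) (Fin (ϱ + 1)) R :=
  of fun k l => Fin.cases (Fin.cases c v k)
    (fun l' => Fin.cases (u l') (fun k' => if k' = l' then -1 else 0) k) l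

lemma mul_arrowhead_eq_one {c : R} {u v : Fin ϱ → R} {W : Matrix (Fin (ϱ + 1)) (Fin (ϱ + 1)) R}
    (h : W * arrowhead c u v = 1) : W 0 0 * (c + ∑ j, u j * v j) = 1 := by
  have hrow (l : Fin ϱ) : W 0 l.succ = W 0 0 * u l := by
    have := congr_fun₂ h 0 l.succ
    simp [mul_apply, Fin.sum_univ_succ, arrowhead] at this
    exact (add_neg_eq_zero.mp this).symm
  simpa [mul_apply, Fin.sum_univ_succ, arrowhead, hrow, mul_add, Finset.mul_sum, mul_assoc]
    using congr_fun₂ h 0 0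

lemma arrowhead_mul_eq_one {c : R} {u v : Fin ϱ → R} {W : Matrix (Fin (ϱ + 1)) (Fin (ϱ + 1)) R}
    (h : arrowhead c u v * W = 1) : (c + ∑ j, u j * v j) * W 0 0 = 1 := by
  have hcol (k : Fin ϱ) : W k.succ 0 = v k * W 0 0 := by
    have := congr_fun₂ h k.succ 0
    simp [mul_apply, Fin.sum_univ_succ, arrowhead] at this
    exact (add_neg_eq_zero.mp this).symm
  simpa [mul_apply, Fin.sum_univ_succ, arrowhead, hcol, add_mul, Finset.sum_mul, mul_assoc]
    using congr_fun₂ h 0 0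

/-- The product `[[1, 0], [v, 1]] * diagonal (q, -1, …, -1) * [[1, u], [0, 1]]`. -/
def arrowheadInv (q : R) (u v : Fin ϱ → R) : Matrix (Fin (ϱ + 1)) (Fin (ϱ + 1)) R :=
  of fun k l => Fin.cases (Fin.cases q (fun k' => v k' * q) k)
    (fun l' => Fin.cases (q * u l') (fun k' => v k' * q * u l' - if k' = l' then 1 else 0) k) l

lemma arrowhead_mul_arrowheadInv {c q : R} {u v : Fin ϱ → R}
    (hq : (c + ∑ j, u j * v j) * q = 1) : arrowhead c u v * arrowheadInv q u v = 1 := by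
  ext k l
  cases k using Fin.cases <;> cases l using Fin.cases <;>
    simp [mul_apply, Fin.sum_univ_succ, arrowhead, arrowheadInv, one_apply, mul_sub,
      Finset.sum_sub_distrib, (Fin.succ_ne_zero _).symm, ← mul_assoc, ← Finset.sum_mul]
  case zero.zero => rw [← add_mul, hq]
  case zero.succ => rw [← add_sub_assoc, ← add_mul, ← add_mul, hq, one_mul, sub_self]
  case succ.succ => split_ifs <;> simp

lemma arrowheadInv_mul_arrowhead {c q : R} {u v : Fin ϱ → R}
    (hq : q * (c + ∑ j, u j * v j) = 1) : arrowheadInv q u v * arrowhead c u v = 1 := by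
  ext k l
  cases k using Fin.cases <;> cases l using Fin.cases <;>
    simp [mul_apply, Fin.sum_univ_succ, arrowhead, arrowheadInv, one_apply, sub_mul,
      Finset.sum_sub_distrib, (Fin.succ_ne_zero _).symm, mul_assoc, ← Finset.mul_sum]
  case zero.zero => rw [← mul_add, hq]
  case succ.zero => rw [← add_sub_assoc, ← mul_add, ← mul_add, hq, mul_one, sub_self]

theorem isUnit_arrowhead_iff {c : R} {u v : Fin ϱ → R} :
    IsUnit (arrowhead c u v) ↔ IsUnit (c + ∑ j, u j * v j) := by
  simp only [isUnit_iff_exists]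
  constructor
  · rintro ⟨W, hLW, hWL⟩
    exact ⟨W 0 0, arrowhead_mul_eq_one hLW, mul_arrowhead_eq_one hWL⟩
  · rintro ⟨q, hdq, hqd⟩
    exact ⟨arrowheadInv q u v, arrowhead_mul_arrowheadInv hdq, arrowheadInv_mul_arrowhead hqd⟩

theorem inverse_arrowhead_zero_zero (c : R) (u v : Fin ϱ → R) :
    Ring.inverse (arrowhead c u v) 0 0 = Ring.inverse (c + ∑ j, u j * v j) := by
  by_cases h : IsUnit (arrowhead c u v)
  · exact (Ring.inverse_unit ⟨_, _, arrowhead_mul_eq_one (Ring.mul_inverse_cancel _ h),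
      mul_arrowhead_eq_one (Ring.inverse_mul_cancel _ h)⟩).symm
  · rw [Ring.inverse_non_unit _ h, Ring.inverse_non_unit _ (isUnit_arrowhead_iff.not.mp h)]
    rfl

end Arrowhead

section RankDecomposition

open scoped ComplexOrder

variable {𝕜 m n : Type*} [RCLike 𝕜] [Fintype m] [Fintype n]

theorem exists_unitary_mul_eq_and_mul_conjTranspose_eq_diagonal [DecidableEq m]
    (A : Matrix m n 𝕜) :
    ∃ (U : unitaryGroup m 𝕜) (B : Matrix m n 𝕜) (μ : m → ℝ),
      (U : Matrix m m 𝕜) * B = A ∧ B * Bᴴ = diagonal (RCLike.ofReal ∘ μ) ∧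
        A.rank = Fintype.card {i // μ i ≠ 0} := by
  have hH : (A * Aᴴ).IsHermitian := isHermitian_mul_conjTranspose_self A
  refine ⟨hH.eigenvectorUnitary, star (hH.eigenvectorUnitary : Matrix m m 𝕜) * A,
    hH.eigenvalues, ?_, ?_, ?_⟩
  · rw [← Matrix.mul_assoc, Unitary.mul_star_self_of_mem (SetLike.coe_mem _), Matrix.one_mul]
  · rw [← hH.conjStarAlgAut_star_eigenvectorUnitary, Unitary.conjStarAlgAut_star_apply,
      conjTranspose_mul, star_eq_conjTranspose, conjTranspose_conjTranspose]
    simp only [Matrix.mul_assoc]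
  · rw [← hH.rank_eq_card_non_zero_eigs, rank_self_mul_conjTranspose]

theorem exists_orthonormal_orthogonal_rank_decomposition {ϱ : ℕ} (A : Matrix m n 𝕜)
    (hA : A.rank = ϱ) :
    ∃ (r : Fin ϱ → m → 𝕜) (t : Fin ϱ → n → 𝕜),
      (∀ k l, ∑ i, starRingEnd 𝕜 (r k i) * r l i = if k = l then 1 else 0) ∧
      (∀ k, t k ≠ 0) ∧
      (∀ k l, k ≠ l → ∑ j, starRingEnd 𝕜 (t k j) * t l j = 0) ∧
      ∀ i j, A i j = ∑ k, starRingEnd 𝕜 (r k i) * starRingEnd 𝕜 (t k j) := by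
  classical
  obtain ⟨U, B, μ, hUB, hBB, hrank⟩ := exists_unitary_mul_eq_and_mul_conjTranspose_eq_diagonal A
  have hU : star (U : Matrix m m 𝕜) * U = 1 := mem_unitaryGroup_iff'.mp U.2
  let e : Fin ϱ ≃ {i // μ i ≠ 0} := (Fintype.equivFinOfCardEq (hA ▸ hrank).symm).symm
  have he : Function.Injective fun k => (e k : m) := Subtype.val_injective.comp e.injective
  have hBB_apply (i i' : m) : ∑ j, B i j * star (B i' j) = if i = i' then (μ i : 𝕜) else 0 := by
    simpa [mul_apply, diagonal_apply] using congr_fun₂ hBB i i'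
  have hrow (i : m) : B i = 0 ↔ μ i = 0 := by
    have hμ : B i ⬝ᵥ star (B i) = μ i := by simpa [dotProduct] using hBB_apply i i
    rw [← dotProduct_self_star_eq_zero, hμ, RCLike.ofReal_eq_zero]
  refine ⟨fun k i => star (U i (e k)), fun k j => star (B (e k) j), ?_, ?_, ?_, ?_⟩
  · intro k l
    simpa [mul_apply, one_apply, he.eq_iff, mul_comm, @eq_comm _ l k] using
      congr_fun₂ hU (e l) (e k)
  · intro k hk
    exact (e k).2 ((hrow _).mp (by simpa [funext_iff] using hk))
  · intro k l hkl
    simpa [he.ne hkl] using hBB_apply (e k) (e l)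
  · intro i j
    rw [← congr_fun₂ hUB i j, mul_apply]
    refine (Fintype.sum_of_injective _ he _ _ (fun i' hi' => ?_) (fun k => by simp)).symm
    have hμ : μ i' = 0 := by
      by_contra hμ
      exact hi' ⟨e.symm ⟨i', hμ⟩, by simp⟩
    simp [(hrow i').mpr hμ]

end RankDecomposition

end Matrix

section Linearization

variable {𝒜 : Type*} [Ring 𝒜] [Algebra ℂ 𝒜] {n ϱ : ℕ}

lemma linMatAlg_eq_arrowhead (r : Fin ϱ → Fin n → ℂ) (s : Fin (ϱ + 1) → Fin n → ℂ) (γ z : ℂ)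
    (x : Fin n → 𝒜) :
    linMatAlg r s γ z x = Matrix.arrowhead (bracket (s 0) x + algebraMap ℂ 𝒜 (γ - z))
      (fun k => bracket (r k) x) (fun k => bracket (s k.succ) x) := by
  ext k l
  cases k using Fin.cases <;> cases l using Fin.cases <;>
    simp [linMatAlg, Matrix.arrowhead, Fin.succ_ne_zero]

lemma bracket_mul_bracket (u v : Fin n → ℂ) (x : Fin n → 𝒜) :
    bracket u x * bracket v x
      = ∑ ℓ, ∑ m, (starRingEnd ℂ (u ℓ) * starRingEnd ℂ (v m)) • (x ℓ * x m) := by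
  simp only [bracket, Finset.sum_mul_sum, smul_mul_smul_comm]

lemma quadEvalAlg_sub_algebraMap {a : Fin n → Fin n → ℂ} {r t : Fin ϱ → Fin n → ℂ}
    (ha : ∀ ℓ m, a ℓ m = ∑ k, starRingEnd ℂ (r k ℓ) * starRingEnd ℂ (t k m))
    (b : Fin n → ℂ) (γ z : ℂ) (x : Fin n → 𝒜) :
    quadEvalAlg a b γ x - algebraMap ℂ 𝒜 z
      = bracket (star b) x + algebraMap ℂ 𝒜 (γ - z) + ∑ k, bracket (r k) x * bracket (t k) x := by
  have hquad : ∑ k, bracket (r k) x * bracket (t k) x = ∑ ℓ, ∑ m, a ℓ m • (x ℓ * x m) := by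
    simp only [bracket_mul_bracket, ha, Finset.sum_smul]
    rw [Finset.sum_comm]
    exact Finset.sum_congr rfl fun ℓ _ => Finset.sum_comm
  rw [hquad, quadEvalAlg, map_sub]
  simp only [bracket, Pi.star_apply, starRingEnd_apply, star_star]
  abel

end Linearization

theorem linearization_trick_general {𝒜 : Type*} [Ring 𝒜] [Algebra ℂ 𝒜] (n ϱ : ℕ)
    (x : Fin n → 𝒜) (a : Fin n → Fin n → ℂ) (ha : (Matrix.of a).rank = ϱ)
    (b : Fin n → ℂ) (γ : ℂ) :
    ∃ (r : Fin ϱ → Fin n → ℂ) (s : Fin (ϱ + 1) → Fin n → ℂ),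
      (∀ k l : Fin ϱ, ∑ i, (starRingEnd ℂ) (r k i) * r l i = if k = l then 1 else 0) ∧
      (∀ k : Fin (ϱ + 1), k ≠ 0 → s k ≠ 0) ∧
      (∀ k l : Fin (ϱ + 1), k ≠ 0 → l ≠ 0 → k ≠ l →
        ∑ i, (starRingEnd ℂ) (s k i) * s l i = 0) ∧
      ∀ z : ℂ,
        (IsUnit (linMatAlg r s γ z x) ↔ IsUnit (quadEvalAlg a b γ x - algebraMap ℂ 𝒜 z)) ∧
        (IsUnit (linMatAlg r s γ z x) →
          Ring.inverse (linMatAlg r s γ z x) 0 0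
            = Ring.inverse (quadEvalAlg a b γ x - algebraMap ℂ 𝒜 z)) := by
  obtain ⟨r, t, hr, ht_ne, ht_orth, hdec⟩ :=
    (Matrix.of a).exists_orthonormal_orthogonal_rank_decomposition ha
  refine ⟨r, Fin.cons (star b) t, hr, ?_, ?_, fun z => ?_⟩
  · intro k hk
    obtain ⟨k, rfl⟩ := Fin.exists_succ_eq.mpr hk
    simpa using ht_ne k
  · intro k l hk hl hkl
    obtain ⟨k, rfl⟩ := Fin.exists_succ_eq.mpr hk
    obtain ⟨l, rfl⟩ := Fin.exists_succ_eq.mpr hl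
    simpa using ht_orth k l ((Fin.succ_injective _).ne_iff.mp hkl)
  · rw [linMatAlg_eq_arrowhead, quadEvalAlg_sub_algebraMap (a := a) hdec]
    simp only [Fin.cons_zero, Fin.cons_succ]
    exact ⟨Matrix.isUnit_arrowhead_iff, fun _ => Matrix.inverse_arrowhead_zero_zero _ _ _⟩

/-- **Linearization** (Lemma 4.1): for a degree-two polynomial with quadratic part of rank
`ϱ ≥ 1`, there are orthonormal `r₁,…,r_ϱ` and orthogonal nonzero `s₁,…,s_ϱ` (plus `s₀`) such
that for every `z`, the linearization `L^z(x)` is invertible iff `p(x) − z·1` is, and then the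
`(0,0)`-entry of its inverse equals `(p(x) − z·1)⁻¹`. -/
theorem linearization_trick {𝒜 : Type*} [Ring 𝒜] [Algebra ℂ 𝒜] (n ϱ : ℕ) (hϱ : 1 ≤ ϱ)
    (x : Fin n → 𝒜) (a : Fin n → Fin n → ℂ) (ha : (Matrix.of a).rank = ϱ)
    (b : Fin n → ℂ) (γ : ℂ) :
    ∃ (r : Fin ϱ → Fin n → ℂ) (s : Fin (ϱ + 1) → Fin n → ℂ),
      (∀ k l : Fin ϱ, ∑ i, (starRingEnd ℂ) (r k i) * r l i = if k = l then 1 else 0) ∧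
      (∀ k : Fin (ϱ + 1), k ≠ 0 → s k ≠ 0) ∧
      (∀ k l : Fin (ϱ + 1), k ≠ 0 → l ≠ 0 → k ≠ l →
        ∑ i, (starRingEnd ℂ) (s k i) * s l i = 0) ∧
      ∀ z : ℂ,
        (IsUnit (linMatAlg r s γ z x) ↔ IsUnit (quadEvalAlg a b γ x - algebraMap ℂ 𝒜 z)) ∧
        (IsUnit (linMatAlg r s γ z x) →
          Ring.inverse (linMatAlg r s γ z x) 0 0
            = Ring.inverse (quadEvalAlg a b γ x - algebraMap ℂ 𝒜 z)) :=
  linearization_trick_general n ϱ x a ha b γ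

end
end

section
/- Let N ≥ 1 and ϱ ≥ 1, and let M be a (ϱ+1)N × (ϱ+1)N complex matrix whose columns are indexed by pairs (l,j) with l ∈ {0,…,ϱ} and j ∈ [N]. For j ∈ [N] let C_j denote the (ϱ+1)N × (ϱ+1) submatrix of M formed by the columns {(l,j) : l ∈ {0,…,ϱ}}, and let V_{(j)} ⊆ ℂ^{(ϱ+1)N} be the span of all the other columns of M. Suppose that for each j ∈ [N], U_j is a (ϱ+1)N × (ϱ+1) matrix whose ϱ+1 columns are orthonormal and each orthogonal to V_{(j)}. If σ_min(M) ≤ ε for some ε ≥ 0, then there exists j₀ ∈ [N] such that σ_min(U_{j₀}* C_{j₀}) ≤ ε·√N. -/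
/-! A unit vector `v` with `‖M v‖` close to `σ_min(M)` has some block `v(·, j)` of norm at least
`1/√N`. As `U_j*` annihilates the columns of `M` outside block `j`, we get
`U_j* C_j v(·, j) = U_j* M v`, and `U_j*` is a contraction because `U_j* U_j = 1`; hence
`σ_min(U_j* C_j) ≤ √N ‖M v‖`. So `min_j σ_min(U_j* C_j) / √N` is a lower bound for `‖M v‖` over
all unit `v`, i.e. for `σ_min(M)`. -/

noncomputable section

/-- Euclidean norm of a finitely-indexed complex vector. -/
def evnorm {ι : Type*} [Fintype ι] (v : ι → ℂ) : ℝ :=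
  Real.sqrt (∑ i, Complex.normSq (v i))

/-- Smallest singular value of a complex matrix: the infimum of `‖A v‖₂` over unit vectors `v`. -/
def sigmaMin {ι κ : Type*} [Fintype ι] [Fintype κ] (A : Matrix ι κ ℂ) : ℝ :=
  sInf {r : ℝ | ∃ v : κ → ℂ, evnorm v = 1 ∧ r = evnorm (A.mulVec v)}

open Matrix
open scoped Matrix.Norms.L2Operator

section evnorm

variable {ι : Type*} [Fintype ι]

lemma evnorm_eq_norm_toLp (v : ι → ℂ) : evnorm v = ‖WithLp.toLp 2 v‖ := by
  simp [evnorm, EuclideanSpace.norm_eq, Complex.sq_norm]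

lemma evnorm_nonneg (v : ι → ℂ) : 0 ≤ evnorm v := Real.sqrt_nonneg _

lemma evnorm_smul (c : ℂ) (v : ι → ℂ) : evnorm (c • v) = ‖c‖ * evnorm v := by
  simp only [evnorm_eq_norm_toLp, WithLp.toLp_smul, norm_smul]

lemma evnorm_sq_eq_sum_blocks {κ : Type*} [Fintype κ] (v : κ × ι → ℂ) :
    evnorm v ^ 2 = ∑ j, evnorm (fun l => v (l, j)) ^ 2 := by
  simp only [evnorm_eq_norm_toLp, EuclideanSpace.norm_sq_eq]
  rw [Fintype.sum_prod_type, Finset.sum_comm]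

lemma exists_evnorm_le_sqrt_card_mul_block {κ : Type*} [Fintype κ] [Nonempty ι]
    (v : κ × ι → ℂ) : ∃ j, evnorm v ≤ √(Fintype.card ι) * evnorm (fun l => v (l, j)) := by
  obtain ⟨j, -, hj⟩ := Finset.univ.exists_max_image (fun j => evnorm (fun l => v (l, j)) ^ 2)
    Finset.univ_nonempty
  refine ⟨j, ?_⟩
  have hsq : evnorm v ^ 2 ≤ Fintype.card ι * evnorm (fun l => v (l, j)) ^ 2 := by
    rw [evnorm_sq_eq_sum_blocks, ← nsmul_eq_mul, ← Finset.card_univ]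
    exact Finset.sum_le_card_nsmul _ _ _ fun j' _ => hj j' (Finset.mem_univ _)
  rw [← Real.sqrt_sq (evnorm_nonneg v), ← Real.sqrt_sq (evnorm_nonneg (fun l => v (l, j))),
    ← Real.sqrt_mul (Nat.cast_nonneg _)]
  exact Real.sqrt_le_sqrt hsq

end evnorm

lemma evnorm_conjTranspose_mulVec_le {m k : Type*} [Fintype m] [Fintype k] [DecidableEq k]
    (U : Matrix m k ℂ) (hU : Uᴴ * U = 1) (x : m → ℂ) : evnorm (Uᴴ *ᵥ x) ≤ evnorm x := by
  classical
  have hnorm_one : ‖(1 : Matrix k k ℂ)‖ ≤ 1 := by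
    rw [← diagonal_one, l2_opNorm_diagonal]
    exact pi_norm_le_iff_of_nonneg zero_le_one |>.2 fun _ => by simp
  have hUnorm : ‖Uᴴ‖ ≤ 1 := by
    rw [l2_opNorm_conjTranspose]
    nlinarith [l2_opNorm_conjTranspose_mul_self U, norm_nonneg U, hU ▸ hnorm_one]
  rw [evnorm_eq_norm_toLp, evnorm_eq_norm_toLp]
  calc ‖WithLp.toLp 2 (Uᴴ *ᵥ x)‖ ≤ ‖Uᴴ‖ * ‖WithLp.toLp 2 x‖ := l2_opNorm_mulVec Uᴴ (WithLp.toLp 2 x)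
    _ ≤ ‖WithLp.toLp 2 x‖ := mul_le_of_le_one_left (norm_nonneg _) hUnorm

lemma mulVec_eq_block_mulVec {R m κ ι : Type*} [NonUnitalNonAssocSemiring R] [Fintype κ]
    [Fintype ι] (A : Matrix m (κ × ι) R) (j : ι) (hA : ∀ p l j', j' ≠ j → A p (l, j') = 0)
    (v : κ × ι → R) : A *ᵥ v = (of fun p l => A p (l, j)) *ᵥ fun l => v (l, j) := by
  ext p
  simp only [mulVec, dotProduct, of_apply, Fintype.sum_prod_type]
  rw [Finset.sum_comm]
  refine Finset.sum_eq_single j (fun j' _ hj' => ?_) (by simp)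
  simp [hA p _ j' hj']

section sigmaMin

variable {ι κ : Type*} [Fintype ι] [Fintype κ]

lemma sigmaMin_nonneg (A : Matrix ι κ ℂ) : 0 ≤ sigmaMin A :=
  Real.sInf_nonneg <| by rintro _ ⟨v, -, rfl⟩; exact evnorm_nonneg _

lemma sigmaMin_le_evnorm_mulVec (A : Matrix ι κ ℂ) {v : κ → ℂ} (hv : evnorm v = 1) :
    sigmaMin A ≤ evnorm (A *ᵥ v) :=
  csInf_le ⟨0, by rintro _ ⟨w, -, rfl⟩; exact evnorm_nonneg _⟩ ⟨v, hv, rfl⟩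

lemma sigmaMin_mul_evnorm_le (A : Matrix ι κ ℂ) (w : κ → ℂ) :
    sigmaMin A * evnorm w ≤ evnorm (A *ᵥ w) := by
  rcases (evnorm_nonneg w).eq_or_lt with hw | hw
  · rw [← hw, mul_zero]; exact evnorm_nonneg _
  have hunit : evnorm (((evnorm w)⁻¹ : ℂ) • w) = 1 := by
    rw [evnorm_smul, ← Complex.ofReal_inv, Complex.norm_real, Real.norm_of_nonneg (by positivity),
      inv_mul_cancel₀ hw.ne']
  have := sigmaMin_le_evnorm_mulVec A hunit
  rw [mulVec_smul, evnorm_smul, ← Complex.ofReal_inv, Complex.norm_real,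
    Real.norm_of_nonneg (by positivity), inv_mul_eq_div, le_div_iff₀ hw] at this
  exact this

lemma le_sigmaMin [Nonempty κ] [DecidableEq κ] (A : Matrix ι κ ℂ) {c : ℝ}
    (h : ∀ v, evnorm v = 1 → c ≤ evnorm (A *ᵥ v)) : c ≤ sigmaMin A := by
  obtain ⟨i⟩ := ‹Nonempty κ›
  refine le_csInf ⟨_, Pi.single i 1, ?_, rfl⟩ ?_
  · simp [evnorm_eq_norm_toLp]
  · rintro _ ⟨v, hv, rfl⟩
    exact h v hv

end sigmaMin

lemma exists_sigmaMin_block_le {m κ ι : Type*} [Fintype m] [Fintype κ] [Fintype ι] [Nonempty ι]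
    [DecidableEq κ] (M : Matrix m (κ × ι) ℂ) (U : ι → Matrix m κ ℂ) (hU : ∀ j, (U j)ᴴ * U j = 1)
    (hperp : ∀ j i l j', j' ≠ j → ((U j)ᴴ * M) i (l, j') = 0) {v : κ × ι → ℂ}
    (hv : evnorm v = 1) :
    ∃ j, sigmaMin ((U j)ᴴ * of fun p l => M p (l, j)) ≤ √(Fintype.card ι) * evnorm (M *ᵥ v) := by
  obtain ⟨j, hj⟩ := exists_evnorm_le_sqrt_card_mul_block v
  refine ⟨j, ?_⟩
  set B := (U j)ᴴ * of fun p l => M p (l, j)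
  have hBv : B *ᵥ (fun l => v (l, j)) = (U j)ᴴ *ᵥ (M *ᵥ v) := by
    rw [mulVec_mulVec, mulVec_eq_block_mulVec _ j (hperp j) v]
    rfl
  calc sigmaMin B ≤ sigmaMin B * (√(Fintype.card ι) * evnorm fun l => v (l, j)) :=
        le_mul_of_one_le_right (sigmaMin_nonneg B) (hv ▸ hj)
    _ = √(Fintype.card ι) * (sigmaMin B * evnorm fun l => v (l, j)) := by ring
    _ ≤ √(Fintype.card ι) * evnorm (M *ᵥ v) := by
        gcongr
        calc _ ≤ evnorm (B *ᵥ fun l => v (l, j)) := sigmaMin_mul_evnorm_le B _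
          _ ≤ evnorm (M *ᵥ v) := hBv ▸ evnorm_conjTranspose_mulVec_le (U j) (hU j) _

theorem smin_reduction_to_test_projection_general (N ϱ : ℕ) (hN : 1 ≤ N)
    (M : Matrix (Fin (ϱ + 1) × Fin N) (Fin (ϱ + 1) × Fin N) ℂ)
    (U : Fin N → Matrix (Fin (ϱ + 1) × Fin N) (Fin (ϱ + 1)) ℂ)
    -- the columns of `U j` are orthonormal …
    (horth : ∀ (j : Fin N) (l l' : Fin (ϱ + 1)),
      ∑ p : Fin (ϱ + 1) × Fin N, (starRingEnd ℂ) (U j p l) * U j p l'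
        = if l = l' then 1 else 0)
    -- … and orthogonal to every column of `M` other than the columns `(·, j)`
    (hperp : ∀ (j : Fin N) (l : Fin (ϱ + 1)) (l' : Fin (ϱ + 1)) (j' : Fin N), j' ≠ j →
      ∑ p : Fin (ϱ + 1) × Fin N, (starRingEnd ℂ) (U j p l) * M p (l', j') = 0)
    (ε : ℝ) (hmin : sigmaMin M ≤ ε) :
    ∃ j₀ : Fin N,
      sigmaMin ((U j₀).conjTranspose * Matrix.of (fun p l => M p (l, j₀)))
        ≤ ε * Real.sqrt N := by
  have : Nonempty (Fin N) := ⟨⟨0, hN⟩⟩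
  have hU : ∀ j, (U j)ᴴ * U j = 1 := fun j => by
    ext l l'
    simpa [mul_apply, one_apply] using horth j l l'
  have hUM : ∀ j i l j', j' ≠ j → ((U j)ᴴ * M) i (l, j') = 0 := fun j i l j' hj' => by
    simpa [mul_apply] using hperp j i l j' hj'
  obtain ⟨j₀, -, hj₀⟩ := Finset.univ.exists_min_image
    (fun j => sigmaMin ((U j)ᴴ * of fun p l => M p (l, j))) Finset.univ_nonempty
  refine ⟨j₀, ?_⟩
  have hsqrt : 0 < √(N : ℝ) := Real.sqrt_pos.2 (by exact_mod_cast hN)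
  have hbound : sigmaMin ((U j₀)ᴴ * of fun p l => M p (l, j₀)) / √N ≤ sigmaMin M :=
    le_sigmaMin M fun v hv => by
      obtain ⟨j, hj⟩ := exists_sigmaMin_block_le M U hU hUM hv
      rw [Fintype.card_fin] at hj
      rw [div_le_iff₀' hsqrt]
      exact (hj₀ j (Finset.mem_univ j)).trans hj
  rw [div_le_iff₀ hsqrt] at hbound
  exact hbound.trans (by gcongr)

/-- **Reduction to the invertibility of a small test projection** (Lemma 5.1):
if `σ_min(M) ≤ ε` then some block column, projected onto the orthocomplement of the span of
the other columns, has smallest singular value at most `ε·√N`. -/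
theorem smin_reduction_to_test_projection (N ϱ : ℕ) (hN : 1 ≤ N) (hϱ : 1 ≤ ϱ)
    (M : Matrix (Fin (ϱ + 1) × Fin N) (Fin (ϱ + 1) × Fin N) ℂ)
    (U : Fin N → Matrix (Fin (ϱ + 1) × Fin N) (Fin (ϱ + 1)) ℂ)
    -- the columns of `U j` are orthonormal …
    (horth : ∀ (j : Fin N) (l l' : Fin (ϱ + 1)),
      ∑ p : Fin (ϱ + 1) × Fin N, (starRingEnd ℂ) (U j p l) * U j p l'
        = if l = l' then 1 else 0)
    -- … and orthogonal to every column of `M` other than the columns `(·, j)`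
    (hperp : ∀ (j : Fin N) (l : Fin (ϱ + 1)) (l' : Fin (ϱ + 1)) (j' : Fin N), j' ≠ j →
      ∑ p : Fin (ϱ + 1) × Fin N, (starRingEnd ℂ) (U j p l) * M p (l', j') = 0)
    (ε : ℝ) (hε : 0 ≤ ε) (hmin : sigmaMin M ≤ ε) :
    ∃ j₀ : Fin N,
      sigmaMin ((U j₀).conjTranspose * Matrix.of (fun p l => M p (l, j₀)))
        ≤ ε * Real.sqrt N :=
  smin_reduction_to_test_projection_general N ϱ hN M U horth hperp ε hmin

end
end
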